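/- arXiv:2208.01977 — 5 statements merged into one kernel-verified Lean document; each statement's English description precedes it below -/
import Mathlib

section
/- If a function g : ℝ≥0 → ℝ is twice continuously differentiable, the limit of g(t) as t → +∞ exists and is finite, and the second derivative g'' is bounded on [0,∞), then the first derivative g'(t) tends to 0 as t → +∞. -/
open Set Filter Real

open scoped Topology

/-- Barbălat's lemma. -/
theorem tendsto_atTop_zero_of_hasDerivAt_of_uniformContinuousOn {g f : ℝ → ℝ} {a L : ℝ}
    (hderiv : ∀ x ∈ Ioi a, HasDerivAt g (f x) x) (hf : UniformContinuousOn f (Ioi a))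
    (hg : Tendsto g atTop (𝓝 L)) : Tendsto f atTop (𝓝 0) := by
  refine Metric.tendsto_nhds.2 fun ε hε => ?_
  obtain ⟨δ, hδ, hfδ⟩ := Metric.uniformContinuousOn_iff.1 hf (ε / 2) (half_pos hε)
  have hincr : Tendsto (fun t => g (t + δ / 2) - g t) atTop (𝓝 0) := by
    simpa using (hg.comp (tendsto_atTop_add_const_right _ _ tendsto_id)).sub hg
  filter_upwards [Metric.tendsto_nhds.1 hincr (δ / 2 * (ε / 2)) (by positivity),
    eventually_gt_atTop a] with t hincr_t hat
  -- On a step of length δ/2 the mean value theorem finds a point where f equals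
  -- the difference quotient of g, which is small; uniform continuity moves it back to t.
  obtain ⟨ξ, hξ, hfξ⟩ := exists_hasDerivAt_eq_slope g f (by linarith : t < t + δ / 2)
    (fun x hx => (hderiv x (hat.trans_le hx.1)).continuousAt.continuousWithinAt)
    (fun x hx => hderiv x (hat.trans hx.1))
  have hslope : |f ξ| < ε / 2 := by
    rw [hfξ, add_sub_cancel_left, abs_div, abs_of_pos (half_pos hδ), div_lt_iff₀ (half_pos hδ)]
    simpa [Real.dist_eq, mul_comm] using hincr_t
  have hclose : |f t - f ξ| < ε / 2 := by
    refine hfδ t hat ξ (hat.trans hξ.1) ?_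
    rw [Real.dist_eq, abs_sub_comm, abs_of_pos (sub_pos.2 hξ.1)]
    linarith [hξ.2]
  rw [Real.dist_eq, sub_zero]
  linarith [abs_sub_abs_le_abs_sub (f t) (f ξ)]

/-- Variant of Barbălat's lemma: if `g` is C² on `[0,∞)`, `g(t)` converges to a finite
limit as `t → +∞`, and the second derivative is bounded on `[0,∞)`, then
`g'(t) → 0` as `t → +∞`. -/
theorem stmt_0 (g : ℝ → ℝ) (hg : ContDiffOn ℝ 2 g (Ici 0))
    (L : ℝ) (hlim : Tendsto g atTop (nhds L))
    (M : ℝ) (hM : ∀ t ≥ (0 : ℝ), |derivWithin (derivWithin g (Ici 0)) (Ici 0) t| ≤ M) :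
    Tendsto (derivWithin g (Ici 0)) atTop (nhds 0) := by
  have hg' : ContDiffOn ℝ 1 (derivWithin g (Ici 0)) (Ici 0) :=
    hg.derivWithin (uniqueDiffOn_Ici 0) (by norm_num)
  have hderiv : ∀ x ∈ Ioi (0 : ℝ), HasDerivAt g (derivWithin g (Ici 0) x) x := fun x hx =>
    ((hg.differentiableOn (by norm_num) x (Ioi_subset_Ici_self hx)).hasDerivWithinAt).hasDerivAt
      (Ici_mem_nhds hx)
  have hlip : LipschitzOnWith M.toNNReal (derivWithin g (Ici 0)) (Ici 0) :=
    (convex_Ici 0).lipschitzOnWith_of_nnnorm_derivWithin_le (hg'.differentiableOn one_ne_zero)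
      fun x hx => by
        rw [← NNReal.coe_le_coe, coe_nnnorm, Real.coe_toNNReal']
        exact (hM x hx).trans (le_max_left _ _)
  exact tendsto_atTop_zero_of_hasDerivAt_of_uniformContinuousOn hderiv
    (hlip.uniformContinuousOn.mono Ioi_subset_Ici_self) hlim
end

section
/- Let v_max > 0, R_out > R_in > 0, ω* ∈ (0, v_max/R_out), and Θ ∈ (0, π/2) with cos(Θ) > R_out ω*/v_max. Then for all v ∈ (0, v_max), s ∈ (−Θ, Θ), r ∈ (R_in, R_out): v_max · v · cos(s) − 2 r v ω* + r ω* v_max > R_in ω* (v_max − v). -/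
open Set Real

/-- Inequality (6.48): positivity of the numerator of the pseudo-relativistic gain. -/
theorem stmt_5 (vmax Rin Rout ω Θ : ℝ)
    (hvmax : 0 < vmax) (hRin : 0 < Rin) (hR : Rin < Rout)
    (hω : ω ∈ Ioo 0 (vmax / Rout))
    (hΘ : Θ ∈ Ioo 0 (π / 2)) (hcos : Real.cos Θ > Rout * ω / vmax) :
    ∀ v ∈ Ioo 0 vmax, ∀ s ∈ Ioo (-Θ) Θ, ∀ r ∈ Ioo Rin Rout,
      vmax * v * Real.cos s - 2 * r * v * ω + r * ω * vmax > Rin * ω * (vmax - v) := by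
  intro v hv s hs r hr
  have habs : |s| < Θ := abs_lt.mpr ⟨hs.1, hs.2⟩
  have hΘπ : Θ ≤ π := le_trans hΘ.2.le (by linarith [Real.pi_pos])
  have hcs : Real.cos Θ < Real.cos s := by
    have := Real.cos_lt_cos_of_nonneg_of_le_pi (abs_nonneg s) hΘπ habs
    rwa [Real.cos_abs] at this
  have hkey : Rout * ω / vmax < Real.cos s := lt_trans hcos hcs
  have h1 : Rout * ω < vmax * Real.cos s := by
    have := (div_lt_iff₀ hvmax).mp hkey
    linarith
  have h2 : vmax * v * Real.cos s > v * (Rout * ω) := by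
    nlinarith [hv.1, mul_lt_mul_of_pos_left h1 hv.1]
  nlinarith [mul_pos hω.1 (mul_pos hv.1 (sub_pos.mpr hr.2)),
    mul_pos hω.1 (mul_pos (sub_pos.mpr hr.1) (sub_pos.mpr hv.2))]
end

section
/- Under the assumptions v_max > 0, R_out > R_in > 0, ω* ∈ (0, v_max/R_out), Θ ∈ (0, π/2) with cos(Θ) > R_out ω*/v_max, the function q(r,s,v) = (v_max v cos(s) − 2 r v ω* + r ω* v_max)/(2 r (v_max − v)² v²) satisfies 1/q(r,s,v) ≤ 2 R_out v_max³ / (R_in ω*) for all (r,s,v) ∈ (R_in, R_out) × (−Θ, Θ) × (0, v_max). -/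
open Set Real

/-- Estimate (6.49): bound on the inverse of the pseudo-relativistic controller gain
`q(r,s,v) = (v_max v cos s − 2 r v ω* + r ω* v_max)/(2 r (v_max − v)² v²)`. -/
theorem stmt_6 (vmax Rin Rout ω Θ : ℝ)
    (hvmax : 0 < vmax) (hRin : 0 < Rin) (hR : Rin < Rout)
    (hω : ω ∈ Ioo 0 (vmax / Rout))
    (hΘ : Θ ∈ Ioo 0 (π / 2)) (hcos : Real.cos Θ > Rout * ω / vmax)
    (q : ℝ → ℝ → ℝ → ℝ)
    (hq : ∀ r s v, q r s v =
      (vmax * v * Real.cos s - 2 * r * v * ω + r * ω * vmax) /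
        (2 * r * (vmax - v) ^ 2 * v ^ 2)) :
    ∀ r ∈ Ioo Rin Rout, ∀ s ∈ Ioo (-Θ) Θ, ∀ v ∈ Ioo 0 vmax,
      1 / q r s v ≤ 2 * Rout * vmax ^ 3 / (Rin * ω) := by
  obtain ⟨hω0, hωmax⟩ := hω
  obtain ⟨hΘ0, hΘπ⟩ := hΘ
  intro r hr s hs v hv
  obtain ⟨hr1, hr2⟩ := hr
  obtain ⟨hs1, hs2⟩ := hs
  obtain ⟨hv1, hv2⟩ := hv
  have hr0 : 0 < r := hRin.trans hr1
  have habs : |s| ≤ Θ := abs_le.mpr ⟨hs1.le, hs2.le⟩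
  have hcos' : Real.cos Θ ≤ Real.cos s := by
    rw [← Real.cos_abs s]
    exact Real.cos_le_cos_of_nonneg_of_le_pi (abs_nonneg s)
      (le_trans hΘπ.le (by linarith [Real.pi_pos])) habs
  have hRoutω : Rout * ω < vmax * Real.cos Θ := by
    have := (div_lt_iff₀ hvmax).mp hcos
    linarith
  have hN : Rin * ω * (vmax - v) ≤
      vmax * v * Real.cos s - 2 * r * v * ω + r * ω * vmax := by
    have h1 : Rout * ω * v ≤ vmax * v * Real.cos s := by
      have := mul_le_mul_of_nonneg_right hcos' hv1.le
      nlinarith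
    nlinarith [h1, mul_nonneg (mul_nonneg (sub_pos.mpr hr1).le hω0.le) (sub_pos.mpr hv2).le,
      mul_nonneg (mul_nonneg (sub_pos.mpr hr2).le hω0.le) hv1.le]
  have hNpos : 0 < vmax * v * Real.cos s - 2 * r * v * ω + r * ω * vmax := by
    have : 0 < Rin * ω * (vmax - v) := mul_pos (mul_pos hRin hω0) (sub_pos.mpr hv2)
    linarith
  have hD : 0 < 2 * r * (vmax - v) ^ 2 * v ^ 2 :=
    mul_pos (mul_pos (by linarith) (pow_pos (sub_pos.mpr hv2) 2)) (pow_pos hv1 2)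
  rw [hq, one_div_div]
  rw [div_le_div_iff₀ hNpos (mul_pos hRin hω0)]
  have hvv : 0 < vmax - v := sub_pos.mpr hv2
  have hRout : 0 < Rout := hRin.trans hR
  have hm : r * ((vmax - v) * v ^ 2) ≤ Rout * vmax ^ 3 := by
    nlinarith [mul_nonneg (sub_pos.mpr hr2).le (mul_nonneg hvv.le (sq_nonneg v)),
      mul_nonneg (mul_nonneg hRout.le (mul_nonneg hvmax.le hvv.le)) (by linarith : (0:ℝ) ≤ vmax + v),
      mul_nonneg hRout.le (mul_nonneg (mul_nonneg hv1.le hv1.le) hv1.le)]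
  have h2 : (0:ℝ) ≤ 2 * (Rin * ω * (vmax - v)) :=
    mul_nonneg (by norm_num) (mul_nonneg (mul_nonneg hRin.le hω0.le) hvv.le)
  have h3 : (0:ℝ) ≤ 2 * Rout * vmax ^ 3 :=
    mul_nonneg (mul_nonneg (by norm_num) hRout.le) (pow_pos hvmax 3).le
  nlinarith [mul_le_mul_of_nonneg_left hN h3, mul_le_mul_of_nonneg_left hm h2]
end

section
/- Let v_max > 0, ω* ∈ (0, v_max/R_out), Θ ∈ (0, π/2) with cos(Θ) > R_out ω*/v_max, A > 0, and 0 < R_in < R_out. For r ∈ (R_in, R_out), s ∈ (−Θ, Θ), and H ≥ A(1/(cos(s) − cos(Θ)) − 1/(1 − cos(Θ))), one has 1/(v_max cos(s) − r ω*) ≤ (A + (1 − cos(Θ)) H)/(A (v_max − R_out ω*) + (v_max cos(Θ) − R_out ω*)(1 − cos(Θ)) H). -/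
/-!
Write `c = cos s`, `C = cos Θ` and `N, D` for the numerator and denominator of the right-hand
side. Clearing denominators, the penalty hypothesis reads `A (1 - c) ≤ H (c - C) (1 - C)`, and
`N (v_max c - R_out ω*) - D = v_max (H (c - C) (1 - C) - A (1 - c))`. Hence
`D ≤ N (v_max c - R_out ω*) ≤ N (v_max c - r ω*)`, which is the claim once `N ≥ 0` and `D > 0`.
-/

open Set Real

lemma Real.cos_lt_cos_of_abs_lt {s Θ : ℝ} (hs : |s| < Θ) (hΘ : Θ ≤ π) : cos Θ < cos s := by
  simpa only [cos_abs] using cos_lt_cos_of_nonneg_of_le_pi (abs_nonneg s) hΘ hs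

lemma mul_one_div_sub_one_div_le_iff {A H c C : ℝ} (hcC : C < c) (hC : C < 1) :
    A * (1 / (c - C) - 1 / (1 - C)) ≤ H ↔ A * (1 - c) ≤ H * ((c - C) * (1 - C)) := by
  have hcC' : 0 < c - C := sub_pos.mpr hcC
  have hC' : 0 < 1 - C := sub_pos.mpr hC
  have hrw : A * (1 / (c - C) - 1 / (1 - C)) = A * (1 - c) / ((c - C) * (1 - C)) := by
    field_simp
    ring
  rw [hrw, div_le_iff₀ (by positivity)]

lemma one_div_sub_le_div_of_mul_le_mul {v ρ ρ' A H c C : ℝ} (hv : 0 ≤ v) (hA : 0 < A)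
    (hcC : C < c) (hc : c ≤ 1) (hρ : ρ < v * C) (hρ' : ρ' ≤ ρ)
    (hpenalty : A * (1 - c) ≤ H * ((c - C) * (1 - C))) :
    1 / (v * c - ρ') ≤ (A + (1 - C) * H) / (A * (v - ρ) + (v * C - ρ) * (1 - C) * H) := by
  have hC : 0 < 1 - C := by linarith
  have hH : 0 ≤ H :=
    nonneg_of_mul_nonneg_left ((mul_nonneg hA.le (sub_nonneg.mpr hc)).trans hpenalty)
      (mul_pos (sub_pos.mpr hcC) hC)
  have hvρ : 0 < v - ρ := by nlinarith
  have hvCρ : 0 < v * C - ρ := sub_pos.mpr hρ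
  have hvcρ : v * C ≤ v * c := mul_le_mul_of_nonneg_left hcC.le hv
  have hN : 0 ≤ A + (1 - C) * H := by positivity
  rw [div_le_div_iff₀ (by linarith) (by positivity)]
  calc 1 * (A * (v - ρ) + (v * C - ρ) * (1 - C) * H)
      ≤ (A + (1 - C) * H) * (v * c - ρ) := by
        linear_combination mul_le_mul_of_nonneg_left hpenalty hv
    _ ≤ (A + (1 - C) * H) * (v * c - ρ') := by gcongr

theorem stmt_9_general (vmax Rin Rout ω Θ A : ℝ)
    (hvmax : 0 < vmax)
    (hω : ω ∈ Ioo 0 (vmax / Rout))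
    (hΘ : Θ ∈ Ioo 0 (π / 2)) (hcos : Real.cos Θ > Rout * ω / vmax) (hA : 0 < A) :
    ∀ r ∈ Ioo Rin Rout, ∀ s ∈ Ioo (-Θ) Θ, ∀ H : ℝ,
      A * (1 / (Real.cos s - Real.cos Θ) - 1 / (1 - Real.cos Θ)) ≤ H →
      1 / (vmax * Real.cos s - r * ω) ≤
        (A + (1 - Real.cos Θ) * H) /
          (A * (vmax - Rout * ω) + (vmax * Real.cos Θ - Rout * ω) * (1 - Real.cos Θ) * H) := by
  rintro r ⟨-, hr⟩ s hs H hH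
  have hΘπ : Θ ≤ π := by linarith [hΘ.2, pi_pos]
  have hcC : cos Θ < cos s := cos_lt_cos_of_abs_lt (abs_lt.mpr hs) hΘπ
  have hC : cos Θ < 1 := by simpa using cos_lt_cos_of_abs_lt (abs_zero.trans_lt hΘ.1) hΘπ
  have hρ : Rout * ω < vmax * cos Θ := by linarith [(div_lt_iff₀ hvmax).mp hcos]
  exact one_div_sub_le_div_of_mul_le_mul hvmax.le hA hcC (cos_le_one s) hρ
    (mul_le_mul_of_nonneg_right hr.le hω.1.le)
    ((mul_one_div_sub_one_div_le_iff hcC hC).mp hH)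

/-- Inequality (6.17): bound on the singular factor `1/(v_max cos s − r ω*)` in terms of
the penalty term of the Control Lyapunov Function. -/
theorem stmt_9 (vmax Rin Rout ω Θ A : ℝ)
    (hvmax : 0 < vmax) (hRin : 0 < Rin) (hR : Rin < Rout)
    (hω : ω ∈ Ioo 0 (vmax / Rout))
    (hΘ : Θ ∈ Ioo 0 (π / 2)) (hcos : Real.cos Θ > Rout * ω / vmax) (hA : 0 < A) :
    ∀ r ∈ Ioo Rin Rout, ∀ s ∈ Ioo (-Θ) Θ, ∀ H : ℝ,
      A * (1 / (Real.cos s - Real.cos Θ) - 1 / (1 - Real.cos Θ)) ≤ H →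
      1 / (vmax * Real.cos s - r * ω) ≤
        (A + (1 - Real.cos Θ) * H) /
          (A * (vmax - Rout * ω) + (vmax * Real.cos Θ - Rout * ω) * (1 - Real.cos Θ) * H) :=
  stmt_9_general vmax Rin Rout ω Θ A hvmax hω hΘ hcos hA
end

section
/- Let g : ℝ≥0 → ℝ≥0 be continuously differentiable with ∫₀^∞ g(t) dt < +∞ and g'(t) ≤ ξ for all t ≥ 0 and some constant ξ > 0. Then lim_{t → +∞} g(t) = 0. -/
open Set Filter MeasureTheory Topology

/-!
If `g` did not tend to `0`, there would be arbitrarily late times `t` with `g t ≥ ε`. Since `g`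
grows at rate at most `ξ`, it stays above `ε / 2` on `[t - ε / (2ξ), t]`, so the integral of
`g` over `[t - ε / (2ξ), ∞)` is at least `ε² / (4ξ)`; but by nonnegativity and integrability
these tail integrals tend to `0`.
-/

theorem tendsto_setIntegral_Ici_atTop_zero {f : ℝ → ℝ} {a : ℝ}
    (hf : IntegrableOn f (Ici a)) :
    Tendsto (fun x ↦ ∫ t in Ici x, f t) atTop (𝓝 0) := by
  have h := tendsto_setIntegral_of_antitone (μ := volume) (f := f) (fun x ↦ measurableSet_Ici)
    (fun _ _ hxy ↦ Ici_subset_Ici.2 hxy) ⟨a, hf⟩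
  have h_empty : ⋂ x : ℝ, Ici x = ∅ :=
    iInter_eq_empty_iff.2 fun t ↦ ⟨t + 1, by simp⟩
  rwa [h_empty, setIntegral_empty] at h

theorem sub_mul_mul_le_setIntegral_Icc {f : ℝ → ℝ} {t ξ δ : ℝ} (hξ : 0 ≤ ξ) (hδ : 0 ≤ δ)
    (hf_int : IntegrableOn f (Icc (t - δ) t))
    (hf_growth : ∀ s ∈ Icc (t - δ) t, f t - f s ≤ ξ * (t - s)) :
    (f t - ξ * δ) * δ ≤ ∫ s in Icc (t - δ) t, f s := by
  have h_lower : ∀ s ∈ Icc (t - δ) t, f t - ξ * δ ≤ f s := fun s hs ↦ by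
    nlinarith [hf_growth s hs, hs.1]
  have h :=
    setIntegral_ge_of_const_le measurableSet_Icc measure_Icc_lt_top.ne h_lower hf_int
  rwa [measureReal_def, Real.volume_Icc, sub_sub_cancel, ENNReal.toReal_ofReal hδ,
    smul_eq_mul, mul_comm δ] at h

theorem tendsto_zero_of_integrableOn_of_sub_le_mul_sub {f : ℝ → ℝ} {a ξ : ℝ} (hξ : 0 < ξ)
    (hf_nonneg : ∀ t ≥ a, 0 ≤ f t) (hf_int : IntegrableOn f (Ici a))
    (hf_growth : ∀ s ≥ a, ∀ t ≥ s, f t - f s ≤ ξ * (t - s)) :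
    Tendsto f atTop (𝓝 0) := by
  refine tendsto_order.2 ⟨fun ε hε ↦ ?_, fun ε hε ↦ ?_⟩
  · filter_upwards [eventually_ge_atTop a] with t ht using hε.trans_le (hf_nonneg t ht)
  set δ := ε / (2 * ξ)
  have hδ : 0 < δ := by positivity
  have hξδ : ξ * δ = ε / 2 := by simp only [δ]; field_simp
  have h_shift : Tendsto (fun t ↦ t - δ) atTop atTop :=
    tendsto_atTop_add_const_right _ (-δ) tendsto_id
  have h_tail : Tendsto (fun t ↦ ∫ s in Ici (t - δ), f s) atTop (𝓝 0) :=
    (tendsto_setIntegral_Ici_atTop_zero hf_int).comp h_shift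
  filter_upwards [h_tail.eventually (gt_mem_nhds (by positivity : 0 < ε / 2 * δ)),
    h_shift.eventually (eventually_ge_atTop a)] with t h_small (hat : a ≤ t - δ)
  by_contra! h_large
  have h_Icc : (f t - ξ * δ) * δ ≤ ∫ s in Icc (t - δ) t, f s :=
    sub_mul_mul_le_setIntegral_Icc hξ.le hδ.le
      (hf_int.mono_set ((Icc_subset_Ici_iff (by linarith)).2 hat))
      fun s hs ↦ hf_growth s (hat.trans hs.1) t hs.2
  have h_mono : ∫ s in Icc (t - δ) t, f s ≤ ∫ s in Ici (t - δ), f s :=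
    setIntegral_mono_set (hf_int.mono_set (Ici_subset_Ici.2 hat))
      (ae_restrict_of_forall_mem measurableSet_Ici fun s hs ↦ hf_nonneg s (hat.trans hs))
      Icc_subset_Ici_self.eventuallyLE
  nlinarith

/-- One-sided derivative-bound version of Barbălat's lemma: a nonnegative, integrable,
continuously differentiable function on `[0, ∞)` whose derivative is bounded above
tends to `0` at `+∞`. -/
theorem stmt_18 (g : ℝ → ℝ) (hg : ContDiff ℝ 1 g)
    (hgnonneg : ∀ t ≥ (0 : ℝ), 0 ≤ g t)
    (hgint : IntegrableOn g (Ici 0))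
    (ξ : ℝ) (hξ : 0 < ξ) (hderiv : ∀ t ≥ (0 : ℝ), deriv g t ≤ ξ) :
    Tendsto g atTop (nhds 0) := by
  have hgd : Differentiable ℝ g := hg.differentiable one_ne_zero
  refine tendsto_zero_of_integrableOn_of_sub_le_mul_sub hξ hgnonneg hgint fun s hs t hst ↦ ?_
  refine (convex_Ici 0).image_sub_le_mul_sub_of_deriv_le hgd.continuous.continuousOn
    hgd.differentiableOn (fun x hx ↦ hderiv x ?_) s hs t (hs.trans hst) hst
  rw [interior_Ici] at hx
  exact hx.le
end
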